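/- Let C and B̂ be real m×n matrices with rank(C) ≤ R₀ and rank(B̂) ≤ R₀ for an integer R₀ ≥ 1. Then ‖C‖_F² − ‖B̂‖_F² ≤ √(2R₀) · (2σ₁(C) + ‖B̂ − C‖_F)². -/

import Mathlib

/-! The triangle inequality `‖C‖_F ≤ ‖B̂‖_F + ‖B̂ - C‖_F` gives
`‖C‖_F² - ‖B̂‖_F² ≤ 2 ‖C‖_F ‖B̂ - C‖_F`. Since `trace (CᵀC)` is the sum of the at most
`rank C` nonzero eigenvalues of `CᵀC`, each at most `σ₁(C)²`, we have `‖C‖_F ≤ √R₀ σ₁(C)`,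
and `2 √R₀ σ₁ δ ≤ √(2R₀) (2σ₁ + δ)²` for `δ = ‖B̂ - C‖_F` finishes. -/

open Matrix

/-- `Aᵀ * A` is Hermitian for a real matrix `A`. -/
lemma herm {m n : ℕ} (A : Matrix (Fin m) (Fin n) ℝ) : (Aᵀ * A).IsHermitian := by
  have h := Matrix.isHermitian_conjTranspose_mul_self A
  rw [Matrix.conjTranspose_eq_transpose_of_trivial] at h
  simpa [Matrix.conjTranspose] using h

/-- The largest singular value of a real matrix: the square root of the largest
eigenvalue of `Aᵀ * A`. -/
noncomputable def sigma1 {m n : ℕ} (A : Matrix (Fin m) (Fin n) ℝ) : ℝ :=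
  Real.sqrt (⨆ i, (herm A).eigenvalues i)

/-- The Frobenius norm `‖A‖_F = √(trace (Aᵀ A))`. -/
noncomputable def frobNorm {m n : ℕ} (A : Matrix (Fin m) (Fin n) ℝ) : ℝ :=
  Real.sqrt (Matrix.trace (Aᵀ * A))

lemma sq_sub_sq_le_two_mul_mul_of_le_add {a b d : ℝ} (ha : 0 ≤ a) (h : a ≤ b + d) :
    a ^ 2 - b ^ 2 ≤ 2 * a * d := by
  rcases le_total d a with hda | had
  · have := pow_le_pow_left₀ (sub_nonneg.2 hda) (show a - d ≤ b by linarith) 2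
    nlinarith [sq_nonneg d]
  · nlinarith

namespace Matrix.IsHermitian

variable {𝕜 n : Type*} [RCLike 𝕜] [Fintype n] [DecidableEq n] {A : Matrix n n 𝕜}

lemma re_trace_le_rank_mul_iSup_eigenvalues (hA : A.IsHermitian) :
    RCLike.re A.trace ≤ A.rank * ⨆ i, hA.eigenvalues i := by
  classical
  set nonzero := Finset.univ.filter fun i => hA.eigenvalues i ≠ 0
  have hrank : A.rank = nonzero.card := by
    rw [hA.rank_eq_card_non_zero_eigs, Fintype.card_subtype]
  have hbdd : BddAbove (Set.range hA.eigenvalues) := (Set.finite_range _).bddAbove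
  calc RCLike.re A.trace = ∑ i ∈ nonzero, hA.eigenvalues i := by
        rw [hA.trace_eq_sum_eigenvalues, map_sum, Finset.sum_filter_ne_zero]
        simp only [RCLike.ofReal_re]
    _ ≤ ∑ _i ∈ nonzero, ⨆ i, hA.eigenvalues i :=
        Finset.sum_le_sum fun i _ => le_ciSup hbdd i
    _ = A.rank * ⨆ i, hA.eigenvalues i := by
        rw [Finset.sum_const, nsmul_eq_mul, hrank]

end Matrix.IsHermitian

lemma Matrix.trace_transpose_mul_self_eq_sum_sq {ι κ R : Type*} [Fintype ι] [Fintype κ]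
    [CommSemiring R] (A : Matrix ι κ R) : (Aᵀ * A).trace = ∑ i, ∑ j, A i j ^ 2 := by
  simp only [trace, diag, mul_apply, transpose_apply, sq]
  exact Finset.sum_comm

section

variable {m n : ℕ}

attribute [local instance] frobeniusNormedAddCommGroup

lemma frobNorm_eq_norm (A : Matrix (Fin m) (Fin n) ℝ) : frobNorm A = ‖A‖ := by
  rw [frobNorm, frobenius_norm_def, trace_transpose_mul_self_eq_sum_sq, Real.sqrt_eq_rpow]
  simp only [Real.norm_eq_abs, Real.rpow_two, sq_abs]

lemma frobNorm_nonneg (A : Matrix (Fin m) (Fin n) ℝ) : 0 ≤ frobNorm A :=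
  Real.sqrt_nonneg _

lemma frobNorm_le_frobNorm_add_frobNorm_sub (A B : Matrix (Fin m) (Fin n) ℝ) :
    frobNorm A ≤ frobNorm B + frobNorm (B - A) := by
  simpa only [frobNorm_eq_norm, sub_sub_cancel] using norm_sub_le B (B - A)

lemma frobNorm_sq_le_rank_mul_sigma1_sq (A : Matrix (Fin m) (Fin n) ℝ) :
    frobNorm A ^ 2 ≤ A.rank * sigma1 A ^ 2 := by
  have hpsd : (Aᵀ * A).PosSemidef := by
    simpa only [conjTranspose_eq_transpose_of_trivial] using posSemidef_conjTranspose_mul_self A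
  have hsup : 0 ≤ ⨆ i, (herm A).eigenvalues i := Real.iSup_nonneg hpsd.eigenvalues_nonneg
  rw [frobNorm, sigma1, Real.sq_sqrt (hpsd.trace_nonneg), Real.sq_sqrt hsup,
    ← rank_transpose_mul_self A]
  exact (herm A).re_trace_le_rank_mul_iSup_eigenvalues

lemma frobNorm_le_sqrt_rank_mul_sigma1 (A : Matrix (Fin m) (Fin n) ℝ) :
    frobNorm A ≤ Real.sqrt A.rank * sigma1 A := by
  refine le_of_pow_le_pow_left₀ two_ne_zero
    (mul_nonneg (Real.sqrt_nonneg _) (Real.sqrt_nonneg _)) ?_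
  rw [mul_pow, Real.sq_sqrt (Nat.cast_nonneg _)]
  exact frobNorm_sq_le_rank_mul_sigma1_sq A

end

theorem stmt_10_general {m n : ℕ} (C Bhat : Matrix (Fin m) (Fin n) ℝ)
    (R₀ : ℕ) (hC : C.rank ≤ R₀) :
    frobNorm C ^ 2 - frobNorm Bhat ^ 2 ≤
      Real.sqrt (2 * R₀) * (2 * sigma1 C + frobNorm (Bhat - C)) ^ 2 := by
  set s := sigma1 C
  set d := frobNorm (Bhat - C)
  have hs : 0 ≤ s := Real.sqrt_nonneg _
  have hd : 0 ≤ d := frobNorm_nonneg _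
  have hC_le : frobNorm C ≤ Real.sqrt R₀ * s :=
    (frobNorm_le_sqrt_rank_mul_sigma1 C).trans (by gcongr)
  have hsqrt : Real.sqrt R₀ ≤ Real.sqrt (2 * R₀) :=
    Real.sqrt_le_sqrt (by linarith [R₀.cast_nonneg (α := ℝ)])
  calc frobNorm C ^ 2 - frobNorm Bhat ^ 2 ≤ 2 * frobNorm C * d :=
        sq_sub_sq_le_two_mul_mul_of_le_add (frobNorm_nonneg C)
          (frobNorm_le_frobNorm_add_frobNorm_sub C Bhat)
    _ ≤ Real.sqrt R₀ * (2 * s * d) := by nlinarith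
    _ ≤ Real.sqrt (2 * R₀) * (2 * s + d) ^ 2 := by
        gcongr
        nlinarith

/-- Difference of squared Frobenius norms of two rank-`R₀` matrices:
`‖C‖_F² − ‖B̂‖_F² ≤ √(2R₀)·(2σ₁(C) + ‖B̂ − C‖_F)²`. -/
theorem stmt_10 {m n : ℕ} (C Bhat : Matrix (Fin m) (Fin n) ℝ)
    (R₀ : ℕ) (hR₀ : 1 ≤ R₀) (hC : C.rank ≤ R₀) (hB : Bhat.rank ≤ R₀) :
    frobNorm C ^ 2 - frobNorm Bhat ^ 2 ≤
      Real.sqrt (2 * R₀) * (2 * sigma1 C + frobNorm (Bhat - C)) ^ 2 :=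
  stmt_10_general C Bhat R₀ hC
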